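/- arXiv:2504.01682 — 4 statements merged into one kernel-verified Lean document; each statement's English description precedes it below -/
import Mathlib

section
/- Let $p$ be a prime and let $G$ be a finite group of order $p^n m$ where $p$ does not divide $m$. If $G$ has a normal subgroup $H$ of order $m$ and a cyclic subgroup $C$ of order $p^n$ with $G = H \rtimes C$ (i.e., $G = HC$ and $H \cap C = 1$), then $\psi_p(G) = \psi_p(C_{p^n m})$. -/
/-- Key lemma: if `H ⊴ G` with `|H| = m` coprime to `p` and `|G/H| = p^n`, then
the `p`-part of the order of `x` equals the order of its image in `G/H`. -/
lemma ppart_eq_orderOf_quot {G : Type*} [Group G] [Fintype G] {p n m : ℕ} (hp : p.Prime)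
    (hpm : ¬ p ∣ m) (H : Subgroup G) [H.Normal] (hHcard : Nat.card H = m)
    (hQcard : Nat.card (G ⧸ H) = p ^ n) (x : G) :
    p ^ (orderOf x).factorization p = orderOf (QuotientGroup.mk x : G ⧸ H) := by
  set q := orderOf (QuotientGroup.mk x : G ⧸ H) with hq
  set k := (orderOf x).factorization p with hk
  -- q divides p^n, so q is a power of p
  have hqdvd : q ∣ p ^ n := by
    rw [← hQcard]
    exact orderOf_dvd_natCard _
  obtain ⟨j, hjn, hqj⟩ := (Nat.dvd_prime_pow hp).mp hqdvd
  -- q divides orderOf x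
  have hqx : q ∣ orderOf x := orderOf_map_dvd (QuotientGroup.mk' H) x
  have hxpos : 0 < orderOf x := orderOf_pos x
  -- j ≤ k
  have hjk : j ≤ k := by
    rw [hk]
    exact (Nat.Prime.pow_dvd_iff_le_factorization hp hxpos.ne').mp (hqj ▸ hqx)
  -- x^q ∈ H
  have hxqH : x ^ q ∈ H := by
    have : (QuotientGroup.mk (x ^ q) : G ⧸ H) = 1 := by
      rw [QuotientGroup.mk_pow]
      exact pow_orderOf_eq_one _
    exact (QuotientGroup.eq_one_iff _).mp this
  -- orderOf (x^q) divides m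
  have hem : orderOf (x ^ q) ∣ m := by
    rw [← hHcard]
    have h1 : orderOf (x ^ q) = orderOf (⟨x ^ q, hxqH⟩ : H) := by
      simpa using (orderOf_injective H.subtype Subtype.coe_injective ⟨x ^ q, hxqH⟩).symm
    rw [h1]
    exact orderOf_dvd_natCard _
  have hpe : ¬ p ∣ orderOf (x ^ q) := fun h => hpm (h.trans hem)
  -- orderOf x ∣ q * orderOf (x^q)
  have hdvd : orderOf x ∣ q * orderOf (x ^ q) := by
    apply orderOf_dvd_of_pow_eq_one
    rw [pow_mul]
    exact pow_orderOf_eq_one _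
  -- p^k divides q
  have hpk : p ^ k ∣ q := by
    have h1 : p ^ k ∣ orderOf x := hk ▸ Nat.ordProj_dvd (orderOf x) p
    have hcop : Nat.Coprime (p ^ k) (orderOf (x ^ q)) :=
      Nat.Coprime.pow_left _ ((Nat.Prime.coprime_iff_not_dvd hp).mpr hpe)
    exact hcop.dvd_of_dvd_mul_right (h1.trans hdvd)
  have hkj : k ≤ j := by
    have := hqj ▸ hpk
    exact (Nat.pow_dvd_pow_iff_le_right hp.one_lt).mp this
  rw [hqj, le_antisymm hjk hkj]

/-- Each fiber of the quotient map has cardinality `Nat.card H`. -/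
lemma fiber_card {G : Type*} [Group G] [Fintype G] (H : Subgroup G) [H.Normal]
    [DecidableEq (G ⧸ H)] (j : G ⧸ H) :
    (Finset.univ.filter (fun x : G => (QuotientGroup.mk x : G ⧸ H) = j)).card
      = Nat.card H := by
  classical
  have h1 : (Finset.univ.filter (fun x : G => (QuotientGroup.mk x : G ⧸ H) = j)).card
      = Nat.card {x : G // (QuotientGroup.mk x : G ⧸ H) = j} := by
    rw [Nat.card_eq_fintype_card, Fintype.card_subtype]
  have e1 : {x : G // (QuotientGroup.mk x : G ⧸ H) = j}
      ≃ (QuotientGroup.mk ⁻¹' ({j} : Set (G ⧸ H)) : Set G) :=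
    Equiv.subtypeEquivRight (fun x => by simp [Set.mem_preimage])
  have e2 := QuotientGroup.preimageMkEquivSubgroupProdSet H ({j} : Set (G ⧸ H))
  rw [h1, Nat.card_congr (e1.trans e2), Nat.card_prod]
  simp

/-- Main counting lemma. -/
lemma psi_p_eq {G : Type*} [Group G] [Fintype G] {p n m : ℕ} (hp : p.Prime)
    (hpm : ¬ p ∣ m) (H : Subgroup G) [H.Normal] [Fintype (G ⧸ H)] (hHcard : Nat.card H = m)
    (hQcard : Nat.card (G ⧸ H) = p ^ n) :
    ∑ x : G, p ^ (orderOf x).factorization p = m * ∑ y : G ⧸ H, orderOf y := by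
  classical
  have : ∑ x : G, p ^ (orderOf x).factorization p
      = ∑ x : G, orderOf (QuotientGroup.mk x : G ⧸ H) := by
    exact Finset.sum_congr rfl fun x _ =>
      ppart_eq_orderOf_quot hp hpm H hHcard hQcard x
  rw [this]
  rw [← Finset.sum_fiberwise' Finset.univ (fun x : G => (QuotientGroup.mk x : G ⧸ H))
    (fun y => orderOf y)]
  rw [Finset.mul_sum]
  apply Finset.sum_congr rfl
  intro j _
  rw [Finset.sum_const, smul_eq_mul, fiber_card H j, hHcard]

/-- If `G` (of order `p^n m`, `p ∤ m`) has a normal subgroup `H` of order `m` and a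
cyclic subgroup `C` of order `p^n` with `G = HC` and `H ∩ C = 1`, then
`ψ_p(G) = ψ_p(C_{p^n m})`, where `o(x_p) = p ^ (orderOf x).factorization p`. -/
theorem psi_p_eq_cyclic_of_structure (p n m : ℕ) (hp : p.Prime) (hpm : ¬ p ∣ m)
    (G : Type*) [Group G] [Fintype G] (hG : Fintype.card G = p ^ n * m)
    (H C : Subgroup G) (hHnormal : H.Normal) (hHcard : Nat.card H = m)
    (hCcyc : IsCyclic C) (hCcard : Nat.card C = p ^ n)
    (hHC : ∀ g : G, ∃ h ∈ H, ∃ c ∈ C, g = h * c) (hint : H ⊓ C = ⊥)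
    (C₀ : Type*) [Group C₀] [Fintype C₀] (hC₀ : IsCyclic C₀)
    (hC₀card : Fintype.card C₀ = p ^ n * m) :
    ∑ x : G, p ^ (orderOf x).factorization p =
      ∑ y : C₀, p ^ (orderOf y).factorization p := by
  classical
  haveI := hHnormal
  have hm0 : m ≠ 0 := fun h => hpm (h ▸ dvd_zero p)
  -- card of G ⧸ H
  have hcardG : Nat.card G = p ^ n * m := by rw [Nat.card_eq_fintype_card, hG]
  have hQcard : Nat.card (G ⧸ H) = p ^ n := by
    have := Subgroup.card_eq_card_quotient_mul_card_subgroup H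
    rw [hcardG, hHcard] at this
    exact Nat.eq_of_mul_eq_mul_right (Nat.pos_of_ne_zero hm0) this.symm
  -- G ⧸ H is cyclic (image of C under the quotient map)
  have hsurj : Function.Surjective ((QuotientGroup.mk' H).comp C.subtype) := by
    intro y
    obtain ⟨g, rfl⟩ := QuotientGroup.mk_surjective y
    obtain ⟨h, hh, c, hc, rfl⟩ := hHC g
    refine ⟨⟨c, hc⟩, ?_⟩
    simp only [MonoidHom.comp_apply, Subgroup.coe_subtype, QuotientGroup.mk'_apply]
    symm
    rw [QuotientGroup.eq]
    simpa [mul_assoc] using hHnormal.conj_mem h⁻¹ (H.inv_mem hh) c⁻¹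
  haveI : IsCyclic (G ⧸ H) := isCyclic_of_surjective _ hsurj
  -- The cyclic group C₀ : find subgroup H₀ of order m
  obtain ⟨g₀, hg₀⟩ := hC₀.exists_generator
  have hordg₀ : orderOf g₀ = p ^ n * m := by
    rw [orderOf_eq_card_of_forall_mem_zpowers hg₀, Nat.card_eq_fintype_card, hC₀card]
  set H₀ : Subgroup C₀ := Subgroup.zpowers (g₀ ^ (p ^ n)) with hH₀
  have hH₀card : Nat.card H₀ = m := by
    rw [hH₀, Nat.card_zpowers, orderOf_pow, hordg₀,
      Nat.gcd_eq_right ⟨m, rfl⟩, Nat.mul_div_cancel_left]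
    exact Nat.pos_of_ne_zero (pow_ne_zero n hp.pos.ne')
  have hcomm : ∀ x y : C₀, x * y = y * x := fun x y => by
    letI : CommGroup C₀ := IsCyclic.commGroup
    exact mul_comm x y
  haveI : H₀.Normal := by
    constructor
    intro a ha g
    rwa [hcomm g a, mul_assoc, mul_inv_cancel, mul_one]
  have hQ₀card : Nat.card (C₀ ⧸ H₀) = p ^ n := by
    have := Subgroup.card_eq_card_quotient_mul_card_subgroup H₀
    rw [Nat.card_eq_fintype_card, hC₀card, hH₀card] at this
    exact Nat.eq_of_mul_eq_mul_right (Nat.pos_of_ne_zero hm0) this.symm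
  haveI : IsCyclic (C₀ ⧸ H₀) :=
    isCyclic_of_surjective (QuotientGroup.mk' H₀) (QuotientGroup.mk'_surjective H₀)
  -- apply the counting lemma to both sides
  haveI : Fintype (G ⧸ H) := Fintype.ofFinite _
  haveI : Fintype (C₀ ⧸ H₀) := Fintype.ofFinite _
  rw [psi_p_eq hp hpm H hHcard hQcard, psi_p_eq hp hpm H₀ hH₀card hQ₀card]
  congr 1
  -- the two cyclic quotients are isomorphic
  have hcards : Nat.card (G ⧸ H) = Nat.card (C₀ ⧸ H₀) := by rw [hQcard, hQ₀card]
  let e : (G ⧸ H) ≃* (C₀ ⧸ H₀) := mulEquivOfCyclicCardEq hcards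
  rw [← Equiv.sum_comp e.toEquiv (fun y => orderOf y)]
  apply Finset.sum_congr rfl
  intro y _
  exact (orderOf_injective e.toMonoidHom e.injective y).symm
end

section
/- Let $p$ be a prime and let $G$ be a finite group of order $p^n m$ where $p$ does not divide $m$. If $\psi_p(G) = \psi_p(C_{p^n m})$, then the Sylow $p$-subgroups of $G$ are cyclic. -/
theorem aux_dvd (o p n m : ℕ) (hp : p.Prime) (ho : o ∣ p^n*m) (hn : ¬ p^n ∣ o) (ho0 : o ≠ 0) :
    o ∣ p^(n-1)*m := by
  set k := o.factorization p with hk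
  have hkn : k ≤ n - 1 := by
    by_contra h
    exact hn ((Nat.Prime.pow_dvd_iff_le_factorization hp ho0).mpr (by omega))
  obtain ⟨t, ht⟩ := Nat.ordProj_dvd o p
  have hpt : ¬ p ∣ t := by
    intro h
    have : p ^ (k+1) ∣ o := by rw [ht, pow_succ]; exact mul_dvd_mul dvd_rfl h
    have := (Nat.Prime.pow_dvd_iff_le_factorization hp ho0).mp this
    omega
  have htm : t ∣ m := by
    have h1 : t ∣ p^n * m := dvd_trans ⟨p^k, by rw [ht]; ring⟩ ho
    have hc : Nat.Coprime (p^n) t := Nat.Coprime.pow_left n ((Nat.Prime.coprime_iff_not_dvd hp).mpr hpt)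
    exact (Nat.Coprime.dvd_of_dvd_mul_left (Nat.Coprime.symm hc) h1)
  calc o = p^k * t := ht
    _ ∣ p^(n-1) * m := mul_dvd_mul (pow_dvd_pow p hkn) htm


/-- If `ψ_p(G) = ψ_p(C_{p^n m})` (where `o(x_p) = p ^ (orderOf x).factorization p`),
then the Sylow `p`-subgroups of `G` are cyclic. -/
theorem sylow_cyclic_of_psi_p_eq (p n m : ℕ) (hp : p.Prime) (hpm : ¬ p ∣ m)
    (G : Type*) [Group G] [Fintype G] (hG : Fintype.card G = p ^ n * m)
    (C₀ : Type*) [Group C₀] [Fintype C₀] (hC₀ : IsCyclic C₀)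
    (hC₀card : Fintype.card C₀ = p ^ n * m)
    (heq : ∑ x : G, p ^ (orderOf x).factorization p =
      ∑ y : C₀, p ^ (orderOf y).factorization p) :
    ∀ P : Sylow p G, IsCyclic P := by
  classical
  have hpf : Fact p.Prime := ⟨hp⟩
  intro P
  by_contra hPc
  have hm0 : m ≠ 0 := by
    rintro rfl
    have := Fintype.card_pos (α := G); omega
  have hm1 : 1 ≤ m := Nat.one_le_iff_ne_zero.mpr hm0
  have hfact : (Nat.card G).factorization p = n := by
    rw [Nat.card_eq_fintype_card, hG, Nat.factorization_mul (pow_ne_zero n hp.pos.ne') hm0]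
    simp [hp.factorization_pow, Nat.factorization_eq_zero_of_not_dvd hpm]
  have hcardP : Nat.card P = p ^ n := by
    rw [P.card_eq_multiplicity, hfact]
  have hn1 : 1 ≤ n := by
    by_contra h
    refine hPc ?_
    have h1 : Nat.card P = 1 := by
      have hn0 : n = 0 := by omega
      rw [hcardP, hn0, pow_zero]
    have : Subsingleton P := (Nat.card_eq_one_iff_unique.mp h1).1
    exact isCyclic_of_subsingleton
  -- Key: no element of G has order divisible by p^n
  have hkey : ∀ x : G, ¬ p ^ n ∣ orderOf x := by
    intro x hdvd
    set g := x ^ (orderOf x / p ^ n) with hg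
    have hog : orderOf g = p ^ n :=
      orderOf_pow_orderOf_div (orderOf_pos x).ne' hdvd
    have hHcard : Nat.card (Subgroup.zpowers g) = p ^ n := by
      rw [Nat.card_zpowers, hog]
    obtain ⟨Q, hQ⟩ := (IsPGroup.of_card hHcard).exists_le_sylow
    have hQcard : Nat.card Q = p ^ n := by
      rw [Q.card_eq_multiplicity, hfact]
    have hgQ : g ∈ Q := hQ (Subgroup.mem_zpowers g)
    have hQcyc : IsCyclic Q := by
      refine isCyclic_of_orderOf_eq_card (⟨g, hgQ⟩ : Q) ?_
      rw [Subgroup.orderOf_mk, hog, hQcard]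
    exact hPc (isCyclic_of_surjective (Sylow.equiv Q P) (Sylow.equiv Q P).surjective)
  -- Upper bound for G's sum
  have hub : ∑ x : G, p ^ (orderOf x).factorization p ≤ (p^n*m) * p^(n-1) := by
    calc ∑ x : G, p ^ (orderOf x).factorization p
        ≤ ∑ _x : G, p ^ (n-1) := by
          refine Finset.sum_le_sum fun x _ => Nat.pow_le_pow_right hp.pos ?_
          by_contra h
          exact hkey x ((Nat.Prime.pow_dvd_iff_le_factorization hp (orderOf_pos x).ne').mpr (by omega))
      _ = (p^n*m) * p^(n-1) := by
          rw [Finset.sum_const, Finset.card_univ, hG, smul_eq_mul]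
  -- Lower bound for C₀'s sum
  set T : Finset C₀ := Finset.univ.filter (fun y => p ^ n ∣ orderOf y) with hT
  set Tc : Finset C₀ := Finset.univ.filter (fun y => ¬ p ^ n ∣ orderOf y) with hTc
  have hsplit : T.card + Tc.card = p^n*m := by
    rw [hT, hTc, Finset.card_filter_add_card_filter_not, Finset.card_univ, hC₀card]
  have hTcle : Tc.card ≤ p^(n-1)*m := by
    have hsub : Tc ⊆ Finset.univ.filter (fun y : C₀ => y ^ (p^(n-1)*m) = 1) := by
      intro y hy
      rw [hTc, Finset.mem_filter] at hy
      rw [Finset.mem_filter]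
      refine ⟨Finset.mem_univ y, orderOf_dvd_iff_pow_eq_one.mp ?_⟩
      refine aux_dvd _ _ _ _ hp ?_ hy.2 (orderOf_pos y).ne'
      rw [← hC₀card]; exact orderOf_dvd_card
    refine le_trans (Finset.card_le_card hsub) ?_
    have := IsCyclic.card_pow_eq_one_le (α := C₀) (n := p^(n-1)*m)
      (Nat.mul_pos (pow_pos hp.pos _) (Nat.pos_of_ne_zero hm0))
    convert this using 2
  have hlb : (p^n*m) * p^(n-1) < ∑ y : C₀, p ^ (orderOf y).factorization p := by
    have h1 : T.card * p ^ n ≤ ∑ y ∈ T, p ^ (orderOf y).factorization p := by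
      have := Finset.card_nsmul_le_sum T (fun y => p ^ (orderOf y).factorization p) (p ^ n)
        (fun y hy => by
          rw [hT, Finset.mem_filter] at hy
          exact Nat.pow_le_pow_right hp.pos
            ((Nat.Prime.pow_dvd_iff_le_factorization hp (orderOf_pos y).ne').mp hy.2))
      simpa [smul_eq_mul] using this
    have h2 : Tc.card ≤ ∑ y ∈ Tc, p ^ (orderOf y).factorization p := by
      have := Finset.card_nsmul_le_sum Tc (fun y => p ^ (orderOf y).factorization p) 1
        (fun y _ => Nat.one_le_iff_ne_zero.mpr (pow_ne_zero _ hp.pos.ne'))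
      simpa [smul_eq_mul] using this
    have hsum : ∑ y ∈ T, p ^ (orderOf y).factorization p + ∑ y ∈ Tc, p ^ (orderOf y).factorization p
        = ∑ y : C₀, p ^ (orderOf y).factorization p := by
      rw [hT, hTc]
      exact Finset.sum_filter_add_sum_filter_not _ _ _
    -- arithmetic
    set t := T.card
    set c := Tc.card
    have hap : p ^ n = p ^ (n-1) * p := by
      rw [← pow_succ]; congr 1; omega
    set a := p ^ (n-1) with ha
    have ha1 : 1 ≤ a := Nat.one_le_iff_ne_zero.mpr (pow_ne_zero _ hp.pos.ne')
    have hp2 : 2 ≤ p := hp.two_le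
    rw [hap] at hsplit h1 ⊢
    have key : (a*p*m) * a < t * (a*p) + c := by
      have hB : (t:ℤ) = (a:ℤ)*p*m - c := by
        have h := hsplit; zify at h; linarith
      have hB' : (t:ℤ)*(a*p) = ((a:ℤ)*p*m - c)*(a*p) := by rw [hB]
      have hA : (c:ℤ)*((a:ℤ)*p-1) ≤ ((a:ℤ)*m)*((a:ℤ)*p-1) := by
        refine mul_le_mul_of_nonneg_right (by exact_mod_cast hTcle) ?_
        have : (1:ℤ) ≤ (a:ℤ)*p := by
          have : 1 ≤ a*p := Nat.mul_pos (by omega) hp.pos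
          exact_mod_cast this
        linarith
      have hD : (2:ℤ)*((a:ℤ)*a*p*m) ≤ (p:ℤ)*((a:ℤ)*a*p*m) := by
        refine mul_le_mul_of_nonneg_right (by exact_mod_cast hp2) ?_
        positivity
      have hE : (1:ℤ) ≤ (a:ℤ)*m := by
        have : 1 ≤ a*m := Nat.mul_pos (by omega) (by omega)
        exact_mod_cast this
      have goalZ : ((a:ℤ)*p*m) * a < (t:ℤ)*(a*p) + c := by nlinarith [hB', hA, hD, hE]
      exact_mod_cast goalZ
    calc (a*p*m) * a < t * (a*p) + c := key
      _ ≤ _ := by rw [← hsum]; omega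
  omega
end

section
/- Let $p$ be a prime and let $G$ be a finite group of order $p^n m$ where $p$ does not divide $m$. If $\psi_p(G) = \psi_p(C_{p^n m})$, then there exists an element $x \in G$ with $o(x_p) = p^n$, i.e., $G$ contains an element whose $p$-part has order $p^n$. -/
open Finset Subgroup

private lemma aux_dvd_of_factorization_le {p N m a : ℕ} (hp : p.Prime) (hpm : ¬ p ∣ m)
    (ha : a ∣ p ^ (N + 1) * m) (ha0 : a ≠ 0) (hν : a.factorization p ≤ N) :
    a ∣ p ^ N * m := by
  have h1 : p ^ a.factorization p ∣ p ^ N := pow_dvd_pow p hν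
  have hcop : (ordCompl[p] a).Coprime (p ^ (N + 1)) :=
    Nat.Coprime.pow_right _
      ((hp.coprime_iff_not_dvd.mpr (Nat.not_dvd_ordCompl hp ha0)).symm)
  have h2 : ordCompl[p] a ∣ m :=
    hcop.dvd_of_dvd_mul_left ((Nat.ordCompl_dvd a p).trans ha)
  calc a = p ^ a.factorization p * ordCompl[p] a := (Nat.ordProj_mul_ordCompl_eq_self a p).symm
    _ ∣ p ^ N * m := mul_dvd_mul h1 h2

private lemma aux_factorization_le {p n m : ℕ} (hp : p.Prime) (hpm : ¬ p ∣ m)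
    {α : Type*} [Group α] [Fintype α] (hcard : Fintype.card α = p ^ n * m) (x : α) :
    (orderOf x).factorization p ≤ n := by
  have h1 : orderOf x ∣ p ^ n * m := hcard ▸ orderOf_dvd_card
  have h2 : p ^ (orderOf x).factorization p ∣ p ^ n * m :=
    (Nat.ordProj_dvd _ p).trans h1
  have h3 : p ^ (orderOf x).factorization p ∣ p ^ n :=
    (Nat.Coprime.pow_left _ (hp.coprime_iff_not_dvd.mpr hpm)).dvd_of_dvd_mul_right h2
  exact (Nat.pow_dvd_pow_iff_le_right hp.one_lt).mp h3

/-- If `ψ_p(G) = ψ_p(C_{p^n m})` (where `o(x_p) = p ^ (orderOf x).factorization p`),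
then `G` has an element whose `p`-part has order `p ^ n`. -/
theorem exists_elt_p_part_full_order (p n m : ℕ) (hp : p.Prime) (hpm : ¬ p ∣ m)
    (G : Type*) [Group G] [Fintype G] (hG : Fintype.card G = p ^ n * m)
    (C₀ : Type*) [Group C₀] [Fintype C₀] (hC₀ : IsCyclic C₀)
    (hC₀card : Fintype.card C₀ = p ^ n * m)
    (heq : ∑ x : G, p ^ (orderOf x).factorization p =
      ∑ y : C₀, p ^ (orderOf y).factorization p) :
    ∃ x : G, p ^ (orderOf x).factorization p = p ^ n := by
  classical
  haveI := hC₀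
  obtain _ | N := n
  · exact ⟨1, by simp⟩
  by_contra hcon
  push_neg at hcon
  have hm0 : m ≠ 0 := by rintro rfl; exact hpm (dvd_zero p)
  have hm1 : 1 ≤ m := Nat.one_le_iff_ne_zero.mpr hm0
  have hp2 : 2 ≤ p := hp.two_le
  set P : ℕ := p ^ N with hP
  have hP1 : 1 ≤ P := Nat.one_le_pow _ _ hp.pos
  -- every element of G has factorization ≤ N
  have hGle : ∀ x : G, (orderOf x).factorization p ≤ N := by
    intro x
    have h1 := aux_factorization_le hp hpm hG x
    have h2 : (orderOf x).factorization p ≠ N + 1 := by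
      intro h
      exact hcon x (by rw [h])
    omega
  -- LHS bound
  have hLHS : ∑ x : G, p ^ (orderOf x).factorization p ≤ (p * P * m) * P := by
    calc ∑ x : G, p ^ (orderOf x).factorization p
        ≤ ∑ _x : G, P := Finset.sum_le_sum fun x _ => Nat.pow_le_pow_right hp.pos (hGle x)
      _ = Fintype.card G * P := by rw [Finset.sum_const, Finset.card_univ, smul_eq_mul]
      _ = (p * P * m) * P := by rw [hG, pow_succ, mul_comm (p ^ N) p]
  -- the set of y with y ^ (P * m) = 1
  set d : ℕ := P * m with hd
  have hd0 : 0 < d := Nat.mul_pos (by omega) (by omega)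
  set T : Finset C₀ := Finset.univ.filter (fun y => y ^ d = 1) with hT
  -- card T ≤ d
  have hTle : T.card ≤ d := IsCyclic.card_pow_eq_one_le hd0
  -- card T ≥ d
  have hTge : d ≤ T.card := by
    obtain ⟨g, hg⟩ := IsCyclic.exists_generator (α := C₀)
    have hog : orderOf g = p * d := by
      rw [orderOf_eq_card_of_forall_mem_zpowers hg, Nat.card_eq_fintype_card, hC₀card,
        pow_succ, hd, mul_comm (p ^ N) p, mul_assoc]
    have hoh : orderOf (g ^ p) = d := by
      rw [orderOf_pow, hog, Nat.gcd_eq_right ⟨d, mul_comm p d ▸ rfl⟩,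
        Nat.mul_div_cancel_left _ hp.pos]
    have : Fintype.card (zpowers (g ^ p)) = d := by rw [Fintype.card_zpowers, hoh]
    rw [← this, ← Fintype.card_coe (s := T)]
    refine Fintype.card_le_of_injective
      (fun y => ⟨y.1, ?_⟩) (fun a b hab => Subtype.ext (Subtype.mk_eq_mk.mp hab))
    have := orderOf_dvd_of_mem_zpowers y.2
    rw [hoh] at this
    simp only [hT, Finset.mem_filter, Finset.mem_univ, true_and]
    exact orderOf_dvd_iff_pow_eq_one.mp this
  have hTcard : T.card = d := le_antisymm hTle hTge
  -- elements outside T have factorization exactly N+1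
  have hout : ∀ y : C₀, y ∉ T → p ^ (orderOf y).factorization p = p * P := by
    intro y hy
    have h1 := aux_factorization_le hp hpm hC₀card y
    have h2 : ¬ (orderOf y).factorization p ≤ N := by
      intro hle
      have ho0 : orderOf y ≠ 0 := (orderOf_pos y).ne'
      have : orderOf y ∣ P * m :=
        aux_dvd_of_factorization_le hp hpm (hC₀card ▸ orderOf_dvd_card) ho0 hle
      exact hy (by simp [hT]; exact orderOf_dvd_iff_pow_eq_one.mp this)
    have : (orderOf y).factorization p = N + 1 := by omega
    rw [this, pow_succ, mul_comm]
  -- RHS lower bound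
  have hsplit := Finset.sum_filter_add_sum_filter_not Finset.univ
    (fun y : C₀ => y ^ d = 1) (fun y => p ^ (orderOf y).factorization p)
  have hT1 : T.card * 1 ≤ ∑ y ∈ T, p ^ (orderOf y).factorization p := by
    rw [mul_one]
    calc T.card = ∑ _y ∈ T, 1 := by simp
      _ ≤ _ := Finset.sum_le_sum fun y _ => Nat.one_le_pow _ _ hp.pos
  have hT2 : ∑ y ∈ Finset.univ.filter (fun y : C₀ => ¬ y ^ d = 1),
      p ^ (orderOf y).factorization p
      = (Finset.univ.filter (fun y : C₀ => ¬ y ^ d = 1)).card * (p * P) := by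
    rw [Finset.sum_congr rfl (fun y hy => hout y (by
      simp only [hT, Finset.mem_filter, Finset.mem_univ, true_and]
      exact (Finset.mem_filter.mp hy).2))]
    rw [Finset.sum_const, smul_eq_mul]
  have hcompl : (Finset.univ.filter (fun y : C₀ => ¬ y ^ d = 1)).card = p * d - d := by
    have := Finset.card_filter_add_card_filter_not
      (s := (Finset.univ : Finset C₀)) (p := fun y : C₀ => y ^ d = 1)
    rw [← hT] at this
    have hcard : Fintype.card C₀ = p * d := by
      rw [hC₀card, pow_succ, hd, mul_comm (p ^ N) p, mul_assoc]
    rw [Finset.card_univ, hcard, hTcard] at this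
    omega
  have hTsum : d ≤ ∑ y ∈ T, p ^ (orderOf y).factorization p := by
    rw [← hTcard]
    calc T.card = T.card * 1 := (mul_one _).symm
      _ ≤ _ := hT1
  have hRHS : d + (p * d - d) * (p * P) ≤ ∑ y : C₀, p ^ (orderOf y).factorization p := by
    rw [← hsplit, hT2, hcompl]
    exact Nat.add_le_add hTsum le_rfl
  -- contradiction
  rw [heq] at hLHS
  have hX : d ≤ p * d - d := by
    have h2d : 2 * d ≤ p * d := Nat.mul_le_mul_right d hp2
    omega
  have hXP : d * (p * P) ≤ (p * d - d) * (p * P) := Nat.mul_le_mul_right _ hX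
  have e1 : (p * P * m) * P = d * (p * P) := by rw [hd]; ring
  have hfinal : (p * P * m) * P < d + (p * d - d) * (p * P) := by
    calc (p * P * m) * P = d * (p * P) := e1
      _ ≤ (p * d - d) * (p * P) := hXP
      _ < d + (p * d - d) * (p * P) := by omega
  exact absurd (le_trans hRHS hLHS) (not_le.mpr hfinal)
end

section
/- Let $G$ be a finite group of order $n$. If $G$ has a normal subgroup $H$ whose order equals the $\pi'$-part of $n$ and a cyclic subgroup $C$ whose order equals the $\pi$-part of $n$ with $G = HC$ and $H \cap C = 1$, then $\psi_\pi(G) = \psi_\pi(C_n)$. -/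
open Classical in
/-- For a set of primes `π`, the `π`-part of a natural number `k`: the largest
divisor of `k` all of whose prime factors lie in `π`. For an element `x` of a
finite group, `o(x_π) = piPart π (orderOf x)`. -/
noncomputable def piPart (π : Set ℕ) (k : ℕ) : ℕ :=
  ∏ p ∈ k.primeFactors, if p ∈ π then p ^ k.factorization p else 1

open Classical

lemma piPart_pos (π : Set ℕ) (k : ℕ) : 0 < piPart π k := by
  unfold piPart
  apply Finset.prod_pos
  intro p hp
  split
  · exact pow_pos (Nat.prime_of_mem_primeFactors hp).pos _
  · exact one_pos

lemma piPart_dvd (π : Set ℕ) (k : ℕ) : piPart π k ∣ k := by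
  rcases eq_or_ne k 0 with rfl | hk
  · exact dvd_zero _
  calc piPart π k ∣ ∏ p ∈ k.primeFactors, p ^ k.factorization p := by
        apply Finset.prod_dvd_prod_of_dvd
        intro p hp
        split
        · exact dvd_rfl
        · exact one_dvd _
    _ = k := Nat.factorization_prod_pow_eq_self hk

lemma piPart_eq_self {π : Set ℕ} {k : ℕ} (hk : k ≠ 0)
    (h : ∀ p ∈ k.primeFactors, p ∈ π) : piPart π k = k := by
  unfold piPart
  rw [Finset.prod_congr rfl fun p hp => if_pos (h p hp)]
  exact Nat.factorization_prod_pow_eq_self hk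

lemma piPart_eq_one {π : Set ℕ} {k : ℕ} (h : ∀ p ∈ k.primeFactors, p ∉ π) :
    piPart π k = 1 :=
  Finset.prod_eq_one fun p hp => if_neg (h p hp)

lemma dvd_piPart {π : Set ℕ} {k p : ℕ} (hp : p ∈ k.primeFactors) (hpπ : p ∈ π) :
    p ∣ piPart π k := by
  have h1 : p ∣ (if p ∈ π then p ^ k.factorization p else 1) := by
    rw [if_pos hpπ]
    have : 0 < k.factorization p := by
      rwa [← Nat.support_factorization, Finsupp.mem_support_iff, ← Nat.pos_iff_ne_zero] at hp
    exact dvd_pow_self p this.ne'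
  exact h1.trans (Finset.dvd_prod_of_mem _ hp)

lemma primeFactors_piPart {π : Set ℕ} {k : ℕ} :
    ∀ q ∈ (piPart π k).primeFactors, q ∈ π := by
  intro q hq
  have hqp := Nat.prime_of_mem_primeFactors hq
  have hdvd : q ∣ piPart π k := Nat.dvd_of_mem_primeFactors hq
  obtain ⟨p, hp, hqd⟩ := hqp.prime.exists_mem_finset_dvd hdvd
  by_cases hpπ : p ∈ π
  · rw [if_pos hpπ] at hqd
    have := hqp.dvd_of_dvd_pow hqd
    rwa [(Nat.prime_dvd_prime_iff_eq hqp (Nat.prime_of_mem_primeFactors hp)).1 this]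
  · rw [if_neg hpπ] at hqd
    exact absurd (Nat.eq_one_of_dvd_one hqd) hqp.one_lt.ne'

lemma piPart_dvd_piPart {π : Set ℕ} {a b : ℕ} (h : a ∣ b) (hb : b ≠ 0) :
    piPart π a ∣ piPart π b := by
  have ha : a ≠ 0 := fun h0 => hb (by simpa [h0] using h)
  have hsub : a.primeFactors ⊆ b.primeFactors := Nat.primeFactors_mono h hb
  have h1 : piPart π a = ∏ p ∈ b.primeFactors, if p ∈ π then p ^ a.factorization p else 1 := by
    unfold piPart
    apply Finset.prod_subset hsub
    intro p hp hpa
    have : a.factorization p = 0 := by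
      rwa [← Finsupp.notMem_support_iff, Nat.support_factorization]
    simp [this]
  rw [h1]
  apply Finset.prod_dvd_prod_of_dvd
  intro p _
  split
  · exact pow_dvd_pow p ((Nat.factorization_le_iff_dvd ha hb).2 h p)
  · exact dvd_rfl

lemma piPart_mul (π : Set ℕ) {a b : ℕ} (ha : a ≠ 0) (hb : b ≠ 0) :
    piPart π (a * b) = piPart π a * piPart π b := by
  have hab : a * b ≠ 0 := mul_ne_zero ha hb
  have key : ∀ c : ℕ, c ≠ 0 → c ∣ a * b →
      piPart π c = ∏ p ∈ (a*b).primeFactors, if p ∈ π then p ^ c.factorization p else 1 := by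
    intro c hc hcd
    unfold piPart
    apply Finset.prod_subset (Nat.primeFactors_mono hcd hab)
    intro p hp hpc
    have : c.factorization p = 0 := by
      rwa [← Finsupp.notMem_support_iff, Nat.support_factorization]
    simp [this]
  rw [key a ha (dvd_mul_right a b), key b hb (dvd_mul_left b a), ← Finset.prod_mul_distrib]
  unfold piPart
  apply Finset.prod_congr rfl
  intro p _
  rw [Nat.factorization_mul ha hb]
  by_cases hpπ : p ∈ π <;> simp [hpπ, pow_add]

lemma piPart_orderOf_eq (π : Set ℕ) {K : Type*} [Group K] [Finite K]
    (N : Subgroup K) [N.Normal]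
    (hN : ∀ p ∈ (Nat.card N).primeFactors, p ∉ π)
    (hQ : ∀ p ∈ (Nat.card (K ⧸ N)).primeFactors, p ∈ π) (g : K) :
    piPart π (orderOf g) = orderOf (QuotientGroup.mk (s := N) g) := by
  set r := orderOf (QuotientGroup.mk (s := N) g) with hr
  have hQfin : Finite (K ⧸ N) := Quotient.finite _
  have hrpos : 0 < r := orderOf_pos _
  have hopos : 0 < orderOf g := orderOf_pos g
  have hNpos : 0 < Nat.card N := Nat.card_pos
  have hrdvd : r ∣ Nat.card (K ⧸ N) := orderOf_dvd_natCard _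
  have hrπ : ∀ p ∈ r.primeFactors, p ∈ π := fun p hp =>
    hQ p (Nat.primeFactors_mono hrdvd Nat.card_pos.ne' hp)
  apply Nat.dvd_antisymm
  · -- piPart (orderOf g) ∣ r
    have hgr : g ^ r ∈ N := by
      rw [← QuotientGroup.eq_one_iff, QuotientGroup.mk_pow]
      exact pow_orderOf_eq_one _
    have hpow : g ^ (r * Nat.card N) = 1 := by
      have h2 := pow_card_eq_one' (G := N) (x := ⟨g ^ r, hgr⟩)
      have h3 : ((⟨g ^ r, hgr⟩ : N) : K) ^ Nat.card N = 1 := by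
        rw [← SubgroupClass.coe_pow, h2]
        rfl
      rw [pow_mul]
      exact h3
    have hdvd2 : orderOf g ∣ r * Nat.card N := orderOf_dvd_of_pow_eq_one hpow
    calc piPart π (orderOf g) ∣ piPart π (r * Nat.card N) :=
          piPart_dvd_piPart hdvd2 (by positivity)
      _ = piPart π r * piPart π (Nat.card N) := piPart_mul π hrpos.ne' hNpos.ne'
      _ = r := by rw [piPart_eq_self hrpos.ne' hrπ, piPart_eq_one hN, mul_one]
  · -- r ∣ piPart (orderOf g)
    have h1 : r ∣ orderOf g := orderOf_map_dvd (QuotientGroup.mk' N) g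
    calc r = piPart π r := (piPart_eq_self hrpos.ne' hrπ).symm
      _ ∣ piPart π (orderOf g) := piPart_dvd_piPart h1 hopos.ne'

lemma card_fiber_mk {K : Type*} [Group K] [Fintype K] (N : Subgroup K) (q : K ⧸ N) :
    Fintype.card {g : K // (QuotientGroup.mk g : K ⧸ N) = q} = Nat.card N := by
  induction q using QuotientGroup.induction_on with
  | H g =>
    rw [Nat.card_eq_fintype_card]
    refine Fintype.card_congr ⟨fun a => ⟨g⁻¹ * a.1, ?_⟩, fun x => ⟨g * x.1, ?_⟩, ?_, ?_⟩
    · have := (QuotientGroup.eq (s := N)).1 a.2.symm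
      simpa using this
    · refine (QuotientGroup.eq (s := N)).2 ?_
      simp only [mul_inv_rev, inv_mul_cancel_right, mul_inv_cancel_left, inv_inv]
      simpa using N.inv_mem x.2
    · intro a; ext; simp
    · intro x; ext; simp

lemma sum_comp_mk {K : Type*} [Group K] [Fintype K] (N : Subgroup K) [N.Normal]
    [Fintype (K ⧸ N)] (f : K ⧸ N → ℕ) :
    ∑ g : K, f (QuotientGroup.mk g) = Nat.card N * ∑ q : K ⧸ N, f q := by
  classical
  rw [← Finset.sum_fiberwise' Finset.univ (QuotientGroup.mk : K → K ⧸ N) f, Finset.mul_sum]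
  apply Finset.sum_congr rfl
  intro q _
  rw [Finset.sum_const, smul_eq_mul]
  congr 1
  rw [← card_fiber_mk N q, Fintype.card_subtype]

/-- If `G` of order `n` has a normal subgroup `H` of order the `π'`-part of `n` and a
cyclic subgroup `C` of order the `π`-part of `n` with `G = HC` and `H ∩ C = 1`,
then `ψ_π(G) = ψ_π(C_n)`. -/
theorem psi_pi_eq_of_structure (n : ℕ) (π : Set ℕ)
    (hπ : ∀ q ∈ π, q.Prime)
    (G : Type*) [Group G] [Fintype G] (hG : Fintype.card G = n)
    (H C : Subgroup G) (hHnormal : H.Normal) (hHcard : Nat.card H = n / piPart π n)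
    (hCcyc : IsCyclic C) (hCcard : Nat.card C = piPart π n)
    (hHC : ∀ g : G, ∃ h ∈ H, ∃ c ∈ C, g = h * c) (hint : H ⊓ C = ⊥)
    (C₀ : Type*) [Group C₀] [Fintype C₀] (hC₀ : IsCyclic C₀) (hC₀card : Fintype.card C₀ = n) :
    ∑ x : G, piPart π (orderOf x) = ∑ y : C₀, piPart π (orderOf y) := by
  classical
  haveI := hHnormal
  have hn0 : n ≠ 0 := by rw [← hG]; exact Fintype.card_ne_zero
  have hnpos : 0 < n := Nat.pos_of_ne_zero hn0
  set m := piPart π n with hm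
  have hmdvd : m ∣ n := piPart_dvd π n
  have hmpos : 0 < m := piPart_pos π n
  have hmπ : ∀ p ∈ m.primeFactors, p ∈ π := primeFactors_piPart
  have hm'pos : 0 < n / m := Nat.div_pos (Nat.le_of_dvd hnpos hmdvd) hmpos
  have hmm' : m * (n / m) = n := Nat.mul_div_cancel' hmdvd
  have hm'π : ∀ p ∈ (n / m).primeFactors, p ∉ π := by
    have h1 : piPart π (n / m) = 1 := by
      have h2 := piPart_mul π hmpos.ne' hm'pos.ne'
      rw [hmm', ← hm, piPart_eq_self hmpos.ne' hmπ] at h2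
      exact (Nat.eq_of_mul_eq_mul_left hmpos (by rw [mul_one]; exact h2)).symm
    intro p hp hpπ
    have hd := dvd_piPart hp hpπ
    rw [h1] at hd
    exact (Nat.prime_of_mem_primeFactors hp).one_lt.ne' (Nat.eq_one_of_dvd_one hd)
  -- G side
  have hcardG : Nat.card G = n := by rw [Nat.card_eq_fintype_card, hG]
  have hcardQ : Nat.card (G ⧸ H) = m := by
    have h4 := Subgroup.card_eq_card_quotient_mul_card_subgroup H
    rw [hcardG, hHcard] at h4
    exact Nat.eq_of_mul_eq_mul_right hm'pos (by rw [← h4, hmm'])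
  have hQcyc : IsCyclic (G ⧸ H) := by
    haveI := hCcyc
    apply isCyclic_of_surjective ((QuotientGroup.mk' H).comp C.subtype)
    intro q
    induction q using QuotientGroup.induction_on with
    | H g =>
      obtain ⟨h, hh, c, hc, rfl⟩ := hHC g
      refine ⟨⟨c, hc⟩, ?_⟩
      show (QuotientGroup.mk c : G ⧸ H) = QuotientGroup.mk (h * c)
      rw [QuotientGroup.mk_mul, (QuotientGroup.eq_one_iff h).2 hh, one_mul]
  haveI : Fintype (G ⧸ H) := Fintype.ofFinite _
  have keyG : ∀ g : G, piPart π (orderOf g) = orderOf (QuotientGroup.mk (s := H) g) := by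
    intro g
    apply piPart_orderOf_eq π H
    · rw [hHcard]; exact hm'π
    · rw [hcardQ]; exact hmπ
  have sumG : ∑ x : G, piPart π (orderOf x) = (n / m) * ∑ q : G ⧸ H, orderOf q := by
    rw [Finset.sum_congr rfl fun x _ => keyG x, sum_comp_mk H (fun q => orderOf q), hHcard, hm]
  -- C₀ side
  obtain ⟨g₀, hg₀⟩ := hC₀.exists_generator
  have hog₀ : orderOf g₀ = n := by
    rw [orderOf_eq_card_of_forall_mem_zpowers hg₀, Nat.card_eq_fintype_card, hC₀card]
  set H₀ := Subgroup.zpowers (g₀ ^ m) with hH₀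
  haveI : H₀.Normal := by
    constructor
    intro x hx g
    obtain ⟨i, rfl⟩ := Subgroup.mem_zpowers_iff.1 (hg₀ g)
    obtain ⟨j, hj⟩ := Subgroup.mem_zpowers_iff.1 hx
    have hc : Commute (g₀ ^ i) x := by
      rw [← hj]; exact ((Commute.refl g₀).pow_right m).zpow_zpow i j
    have he : g₀ ^ i * x * (g₀ ^ i)⁻¹ = x := by
      rw [hc.eq, mul_assoc]
      simp
    rw [he]; exact hx
  have hcardH₀ : Nat.card H₀ = n / m := by
    rw [hH₀, Nat.card_zpowers, orderOf_pow, hog₀, Nat.gcd_eq_right hmdvd]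
  have hcardC₀ : Nat.card C₀ = n := by rw [Nat.card_eq_fintype_card, hC₀card]
  have hcardQ₀ : Nat.card (C₀ ⧸ H₀) = m := by
    have h4 := Subgroup.card_eq_card_quotient_mul_card_subgroup H₀
    rw [hcardC₀, hcardH₀] at h4
    exact Nat.eq_of_mul_eq_mul_right hm'pos (by rw [← h4, hmm'])
  have hQ₀cyc : IsCyclic (C₀ ⧸ H₀) := by
    haveI := hC₀
    exact isCyclic_of_surjective (QuotientGroup.mk' H₀) (QuotientGroup.mk'_surjective H₀)
  haveI : Fintype (C₀ ⧸ H₀) := Fintype.ofFinite _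
  have keyC : ∀ y : C₀, piPart π (orderOf y) = orderOf (QuotientGroup.mk (s := H₀) y) := by
    intro y
    apply piPart_orderOf_eq π H₀
    · rw [hcardH₀]; exact hm'π
    · rw [hcardQ₀]; exact hmπ
  have sumC : ∑ y : C₀, piPart π (orderOf y) = (n / m) * ∑ q : C₀ ⧸ H₀, orderOf q := by
    rw [Finset.sum_congr rfl fun y _ => keyC y, sum_comp_mk H₀ (fun q => orderOf q), hcardH₀]
  haveI := hQcyc
  haveI := hQ₀cyc
  have e : (G ⧸ H) ≃* (C₀ ⧸ H₀) := mulEquivOfCyclicCardEq (by rw [hcardQ, hcardQ₀])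
  have hsum : ∑ q : G ⧸ H, orderOf q = ∑ q : C₀ ⧸ H₀, orderOf q :=
    Fintype.sum_equiv e.toEquiv _ _
      (fun q => (orderOf_injective e.toMonoidHom e.injective q).symm)
  rw [sumG, sumC, hsum]
end
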